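/- arXiv:1706.03480 — 5 statements merged into one kernel-verified Lean document; each statement's English description precedes it below -/
import Mathlib

section
/- Let 𝒜 : 𝒳 → 𝒴 be a surjective linear map between finite-dimensional inner product spaces and let σ > 0. If z ∈ 𝒴 satisfies ‖(𝒜𝒜* + σ·id)z + g‖ ≤ η‖g‖ for some g ∈ 𝒴 and η ≥ 0, then the vector x = 𝒜* z satisfies ‖x‖ ≤ (1 + η) · ‖𝒜†‖ · ‖g‖, where ‖𝒜†‖ is the operator norm of the pseudoinverse. -/
/-!
With `M = 𝒜𝒜*` and `w = (M + σ id) z`, `σ ≥ 0` gives `‖𝒜* z‖² ≤ ⟪z, w⟫`.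
Writing `z = C M z` for the (self-adjoint) inverse `C` of `M` turns this into
`⟪𝒜* z, 𝒜* C w⟫ ≤ ‖𝒜* z‖ ‖𝒜* C‖ ‖w‖`, so `‖𝒜* z‖ ≤ ‖𝒜†‖ ‖w‖`; the residual bound gives
`‖w‖ ≤ (1 + η) ‖g‖`.
-/

open scoped RealInnerProductSpace

theorem IsSelfAdjoint.of_mul_eq_one {R : Type*} [Monoid R] [StarMul R] {a b : R}
    (ha : IsSelfAdjoint a) (hab : a * b = 1) : IsSelfAdjoint b := by
  have hba : star b * a = 1 := by
    simpa only [star_mul, ha.star_eq, star_one] using congrArg star hab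
  calc star b = star b * (a * b) := by rw [hab, mul_one]
    _ = b := by rw [← mul_assoc, hba, one_mul]

namespace ContinuousLinearMap

variable {X Y : Type*} [NormedAddCommGroup X] [InnerProductSpace ℝ X] [CompleteSpace X]
  [NormedAddCommGroup Y] [InnerProductSpace ℝ Y] [CompleteSpace Y]

theorem real_inner_self_comp_adjoint_apply (A : X →L[ℝ] Y) (z : Y) :
    ⟪z, (A ∘L adjoint A) z⟫ = ‖(adjoint A) z‖ ^ 2 := by
  rw [comp_apply, ← adjoint_inner_left, real_inner_self_eq_norm_sq]

theorem norm_adjoint_apply_sq_le_inner_regularized (A : X →L[ℝ] Y) {σ : ℝ} (hσ : 0 ≤ σ)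
    (z : Y) :
    ‖(adjoint A) z‖ ^ 2 ≤ ⟪z, (A ∘L adjoint A + σ • ContinuousLinearMap.id ℝ Y) z⟫ := by
  rw [add_apply, inner_add_right, real_inner_self_comp_adjoint_apply, smul_apply, id_apply,
    real_inner_smul_right, real_inner_self_eq_norm_sq]
  have := mul_nonneg hσ (sq_nonneg ‖z‖)
  linarith

theorem real_inner_eq_inner_adjoint_apply_of_comp_eq_id (A : X →L[ℝ] Y) {C : Y →L[ℝ] Y}
    (hC : IsSelfAdjoint C) (hCM : C ∘L (A ∘L adjoint A) = ContinuousLinearMap.id ℝ Y)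
    (z w : Y) :
    ⟪z, w⟫ = ⟪(adjoint A) z, (adjoint A) (C w)⟫ := by
  have hz : C ((A ∘L adjoint A) z) = z := by simpa using congrArg (· z) hCM
  calc ⟪z, w⟫ = ⟪C ((A ∘L adjoint A) z), w⟫ := by rw [hz]
    _ = ⟪(A ∘L adjoint A) z, C w⟫ := by rw [← adjoint_inner_right, hC.adjoint_eq]
    _ = ⟪(adjoint A) z, (adjoint A) (C w)⟫ := by rw [comp_apply, adjoint_inner_right]

theorem norm_adjoint_apply_le_of_regularized (A : X →L[ℝ] Y) {C : Y →L[ℝ] Y}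
    (hMC : (A ∘L adjoint A) ∘L C = ContinuousLinearMap.id ℝ Y)
    (hCM : C ∘L (A ∘L adjoint A) = ContinuousLinearMap.id ℝ Y) {σ : ℝ} (hσ : 0 ≤ σ) (z : Y) :
    ‖(adjoint A) z‖ ≤
      ‖adjoint A ∘L C‖ * ‖(A ∘L adjoint A + σ • ContinuousLinearMap.id ℝ Y) z‖ := by
  set w := (A ∘L adjoint A + σ • ContinuousLinearMap.id ℝ Y) z
  have hC : IsSelfAdjoint C :=
    (isPositive_self_comp_adjoint A).isSelfAdjoint.of_mul_eq_one hMC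
  have hsq : ‖(adjoint A) z‖ ^ 2 ≤ ‖(adjoint A) z‖ * (‖adjoint A ∘L C‖ * ‖w‖) :=
    calc ‖(adjoint A) z‖ ^ 2 ≤ ⟪z, w⟫ := norm_adjoint_apply_sq_le_inner_regularized A hσ z
      _ = ⟪(adjoint A) z, (adjoint A) (C w)⟫ :=
        real_inner_eq_inner_adjoint_apply_of_comp_eq_id A hC hCM z w
      _ ≤ ‖(adjoint A) z‖ * ‖(adjoint A ∘L C) w‖ := real_inner_le_norm _ _
      _ ≤ ‖(adjoint A) z‖ * (‖adjoint A ∘L C‖ * ‖w‖) := by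
        gcongr; exact (adjoint A ∘L C).le_opNorm w
  have := mul_nonneg (norm_nonneg (adjoint A ∘L C)) (norm_nonneg w)
  nlinarith [norm_nonneg ((adjoint A) z)]

end ContinuousLinearMap

theorem norm_adjoint_step_le_general
    {X Y : Type*} [NormedAddCommGroup X] [InnerProductSpace ℝ X]
    [FiniteDimensional ℝ X] [NormedAddCommGroup Y] [InnerProductSpace ℝ Y]
    [FiniteDimensional ℝ Y]
    (A : X →L[ℝ] Y)
    (C : Y →L[ℝ] Y)
    (hC : (A.comp (ContinuousLinearMap.adjoint A)).comp C =
      ContinuousLinearMap.id ℝ Y)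
    (hC' : C.comp (A.comp (ContinuousLinearMap.adjoint A)) =
      ContinuousLinearMap.id ℝ Y)
    (σ η : ℝ) (hσ : 0 < σ) (g z : Y)
    (hres : ‖(A.comp (ContinuousLinearMap.adjoint A)
        + σ • ContinuousLinearMap.id ℝ Y) z + g‖ ≤ η * ‖g‖) :
    ‖(ContinuousLinearMap.adjoint A) z‖ ≤
      (1 + η) * ‖(ContinuousLinearMap.adjoint A).comp C‖ * ‖g‖ := by
  set w := (A.comp (ContinuousLinearMap.adjoint A) + σ • ContinuousLinearMap.id ℝ Y) z
  have hw : ‖w‖ ≤ (1 + η) * ‖g‖ := by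
    have := norm_sub_le (w + g) g
    rw [add_sub_cancel_right] at this
    linarith
  calc ‖(ContinuousLinearMap.adjoint A) z‖
      ≤ ‖(ContinuousLinearMap.adjoint A).comp C‖ * ‖w‖ :=
        A.norm_adjoint_apply_le_of_regularized hC hC' hσ.le z
    _ ≤ (1 + η) * ‖(ContinuousLinearMap.adjoint A).comp C‖ * ‖g‖ := by
        rw [mul_comm (1 + η), mul_assoc]; gcongr

/-- If 𝒜 is surjective, σ > 0 and z satisfies the inexact regularized normal
equation residual bound ‖(𝒜𝒜* + σ id)z + g‖ ≤ η‖g‖, then x = 𝒜* z satisfies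
‖x‖ ≤ (1+η)·‖𝒜†‖·‖g‖, where 𝒜† = 𝒜*(𝒜𝒜*)⁻¹ is the pseudoinverse. -/
theorem norm_adjoint_step_le
    {X Y : Type*} [NormedAddCommGroup X] [InnerProductSpace ℝ X]
    [FiniteDimensional ℝ X] [NormedAddCommGroup Y] [InnerProductSpace ℝ Y]
    [FiniteDimensional ℝ Y]
    (A : X →L[ℝ] Y) (hA : Function.Surjective A)
    (C : Y →L[ℝ] Y)
    (hC : (A.comp (ContinuousLinearMap.adjoint A)).comp C =
      ContinuousLinearMap.id ℝ Y)
    (hC' : C.comp (A.comp (ContinuousLinearMap.adjoint A)) =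
      ContinuousLinearMap.id ℝ Y)
    (σ η : ℝ) (hσ : 0 < σ) (hη : 0 ≤ η) (g z : Y)
    (hres : ‖(A.comp (ContinuousLinearMap.adjoint A)
        + σ • ContinuousLinearMap.id ℝ Y) z + g‖ ≤ η * ‖g‖) :
    ‖(ContinuousLinearMap.adjoint A) z‖ ≤
      (1 + η) * ‖(ContinuousLinearMap.adjoint A).comp C‖ * ‖g‖ :=
  norm_adjoint_step_le_general A C hC hC' σ η hσ g z hres
end

section
/- Let 𝒜 : 𝒳 → 𝒴 be a surjective linear map between finite-dimensional inner product spaces, σ > 0, g ∈ 𝒴, and suppose z ∈ 𝒴 satisfies ‖(𝒜𝒜* + σ·id)z + g‖ ≤ η‖g‖. Then the residual of x = 𝒜* z satisfies ‖g + 𝒜x‖ ≤ ( σ/(λ_min(𝒜𝒜*) + σ) + η ) ‖g‖, where λ_min(𝒜𝒜*) is the smallest eigenvalue of the positive definite operator 𝒜𝒜*. -/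
set_option maxHeartbeats 1000000


open scoped RealInnerProductSpace

/-- If 𝒜 is surjective, σ > 0, and z satisfies
‖(𝒜𝒜* + σ id)z + g‖ ≤ η‖g‖, then the residual of x = 𝒜* z satisfies
‖g + 𝒜x‖ ≤ (σ/(λ_min + σ) + η)‖g‖, where λ_min is the smallest eigenvalue of
the positive definite operator 𝒜𝒜*. -/
theorem residual_bound_regularized_normal_equation
    {X Y : Type*} [NormedAddCommGroup X] [InnerProductSpace ℝ X]
    [FiniteDimensional ℝ X] [NormedAddCommGroup Y] [InnerProductSpace ℝ Y]
    [FiniteDimensional ℝ Y]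
    (A : X →L[ℝ] Y) (hA : Function.Surjective A)
    (σ η lammin : ℝ) (hσ : 0 < σ) (hη : 0 ≤ η)
    (hlam_lb : ∀ y : Y,
      lammin * ‖y‖ ^ 2 ≤ ⟪(A.comp (ContinuousLinearMap.adjoint A)) y, y⟫)
    (hlam_eig : ∃ y : Y, y ≠ 0 ∧
      (A.comp (ContinuousLinearMap.adjoint A)) y = lammin • y)
    (g z : Y)
    (hres : ‖(A.comp (ContinuousLinearMap.adjoint A)
        + σ • ContinuousLinearMap.id ℝ Y) z + g‖ ≤ η * ‖g‖) :
    ‖g + A ((ContinuousLinearMap.adjoint A) z)‖ ≤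
      (σ / (lammin + σ) + η) * ‖g‖ := by
  set A' := ContinuousLinearMap.adjoint A with hA'
  set B := A.comp A' with hBdef
  set T := B + σ • ContinuousLinearMap.id ℝ Y with hTdef
  have hTapp : ∀ u : Y, T u = B u + σ • u := fun u => rfl
  have hBapp : ∀ u : Y, B u = A (A' u) := fun u => rfl
  have hBw : ∀ w : Y, ⟪B w, w⟫ = ‖A' w‖ ^ 2 := by
    intro w
    have h1 := (ContinuousLinearMap.adjoint_inner_right A (A' w) w).symm
    rw [hBapp, h1, real_inner_self_eq_norm_sq]
  have hBnn : ∀ w : Y, 0 ≤ ⟪B w, w⟫ := by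
    intro w; rw [hBw]; positivity
  have hTw : ∀ w : Y, ⟪T w, w⟫ = ⟪B w, w⟫ + σ * ‖w‖ ^ 2 := by
    intro w
    rw [hTapp, inner_add_left, real_inner_smul_left, real_inner_self_eq_norm_sq]
  have hlam0 : 0 ≤ lammin := by
    obtain ⟨y, hy0, hy⟩ := hlam_eig
    have h1 : ⟪B y, y⟫ = lammin * ‖y‖ ^ 2 := by
      rw [hy, real_inner_smul_left, real_inner_self_eq_norm_sq]
    have h2 := hBnn y
    have h3 : 0 < ‖y‖ ^ 2 := pow_pos (norm_pos_iff.mpr hy0) 2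
    nlinarith
  have hden : 0 < lammin + σ := by linarith
  have hTlow : ∀ w : Y, (lammin + σ) * ‖w‖ ≤ ‖T w‖ := by
    intro w
    rcases eq_or_ne w 0 with rfl | hw
    · simp
    · have h1 : (lammin + σ) * ‖w‖ ^ 2 ≤ ⟪T w, w⟫ := by
        have := hlam_lb w
        rw [hTw]; nlinarith
      have h2 : ⟪T w, w⟫ ≤ ‖T w‖ * ‖w‖ := real_inner_le_norm _ _
      have h3 : 0 < ‖w‖ := norm_pos_iff.mpr hw
      nlinarith
  have hTinj : Function.Injective T := by
    intro a b hab
    have h0 : T (a - b) = 0 := by rw [map_sub, hab, sub_self]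
    have h1 := hTlow (a - b)
    rw [h0, norm_zero] at h1
    have h2 : ‖a - b‖ ≤ 0 := by nlinarith [norm_nonneg (a - b)]
    have h3 : a - b = 0 := by rw [← norm_le_zero_iff]; exact h2
    exact sub_eq_zero.mp h3
  have hTsurj : Function.Surjective T :=
    (LinearMap.injective_iff_surjective (f := (T : Y →ₗ[ℝ] Y))).mp hTinj
  set r := T z + g with hrdef
  obtain ⟨w, hw⟩ := hTsurj g
  obtain ⟨v, hv⟩ := hTsurj r
  have hcomm : ∀ u : Y, T (B u) = B (T u) := by
    intro u
    rw [hTapp u, hTapp (B u), map_add, map_smul]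
  have hrz : T z = r - g := by rw [hrdef]; abel
  have hu : g + A (A' z) = σ • w + B v := by
    apply hTinj
    have hL : T (g + A (A' z)) = B r + σ • g := by
      rw [map_add, ← hBapp, hcomm z, hrz, map_sub, hTapp g]
      abel
    have hR : T (σ • w + B v) = B r + σ • g := by
      rw [map_add, map_smul, hw, hcomm v, hv]
      abel
    rw [hL, hR]
  have hBvTv : ‖B v‖ ≤ ‖T v‖ := by
    have hexp : ‖T v‖ ^ 2 = ‖B v‖ ^ 2 + 2 * (σ * ⟪B v, v⟫) + σ ^ 2 * ‖v‖ ^ 2 := by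
      rw [hTapp v, norm_add_sq_real, real_inner_smul_right, norm_smul,
        mul_pow, Real.norm_eq_abs, sq_abs]
    have h1 : ‖B v‖ ^ 2 ≤ ‖T v‖ ^ 2 := by
      have h2 : 0 ≤ 2 * (σ * ⟪B v, v⟫) := by
        have := hBnn v; positivity
      have h3 : 0 ≤ σ ^ 2 * ‖v‖ ^ 2 := by positivity
      linarith [hexp]
    exact (pow_le_pow_iff_left₀ (norm_nonneg _) (norm_nonneg _) two_ne_zero).mp h1
  have hwbound : σ * ‖w‖ ≤ σ / (lammin + σ) * ‖g‖ := by
    have h1 := hTlow w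
    rw [hw] at h1
    rw [div_mul_eq_mul_div, le_div_iff₀ hden]
    nlinarith
  calc ‖g + A (A' z)‖ = ‖σ • w + B v‖ := by rw [hu]
    _ ≤ ‖σ • w‖ + ‖B v‖ := norm_add_le _ _
    _ ≤ σ / (lammin + σ) * ‖g‖ + η * ‖g‖ := by
        have h1 : ‖σ • w‖ = σ * ‖w‖ := by
          rw [norm_smul, Real.norm_eq_abs, abs_of_pos hσ]
        have h2 : ‖T v‖ ≤ η * ‖g‖ := by rw [hv]; exact hres
        have h3 := le_trans hBvTv h2
        linarith [hwbound]
    _ = (σ / (lammin + σ) + η) * ‖g‖ := by ring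
end

section
/- If B is a self-adjoint positive definite operator on a finite-dimensional inner product space with smallest eigenvalue λ_min > 0 and σ > 0, then the operator norm of id − B(B + σ·id)⁻¹ equals σ/(λ_min + σ), and the operator norm of B(B + σ·id)⁻¹ is at most 1. -/
/-!
Writing `R = (B + σ)⁻¹`, the identity `(B + σ) R = 1` gives `1 - B R = σ R`, so the first
claim is `‖R‖ = (λ_min + σ)⁻¹`. The bound `⟪B u, u⟫ ≥ λ_min ‖u‖²` makes `B + σ` coercive with
constant `λ_min + σ`, which bounds `‖R‖` from above, and an eigenvector for `λ_min` attains the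
bound. For the second claim, `⟪B u, σ u⟫ ≥ 0` gives `‖B u‖ ≤ ‖(B + σ) u‖`; take `u = R x`.
-/

open scoped RealInnerProductSpace

theorem norm_le_norm_add_smul_of_inner_nonneg {E : Type*} [NormedAddCommGroup E]
    [InnerProductSpace ℝ E] {x u : E} (hxu : 0 ≤ ⟪x, u⟫) {t : ℝ} (ht : 0 ≤ t) :
    ‖x‖ ≤ ‖x + t • u‖ := by
  have hsq : ‖x‖ ^ 2 ≤ ‖x + t • u‖ ^ 2 := by
    rw [norm_add_sq_real, real_inner_smul_right]
    nlinarith [sq_nonneg ‖t • u‖]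
  exact le_of_sq_le_sq hsq (norm_nonneg _)

theorem mul_norm_le_norm_of_mul_norm_sq_le_inner {E : Type*} [NormedAddCommGroup E]
    [InnerProductSpace ℝ E] {A : E → E} {c : ℝ} (hA : ∀ u, c * ‖u‖ ^ 2 ≤ ⟪A u, u⟫) (u : E) :
    c * ‖u‖ ≤ ‖A u‖ := by
  rcases eq_or_ne u 0 with rfl | hu
  · simp
  have hu' : 0 < ‖u‖ := norm_pos_iff.mpr hu
  have : c * ‖u‖ * ‖u‖ ≤ ‖A u‖ * ‖u‖ := by
    nlinarith [hA u, real_inner_le_norm (A u) u]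
  exact le_of_mul_le_mul_right this hu'

namespace ContinuousLinearMap

variable {𝕜 E F : Type*} [NontriviallyNormedField 𝕜]

theorem norm_le_inv_of_comp_eq_id [SeminormedAddCommGroup E] [SeminormedAddCommGroup F]
    [NormedSpace 𝕜 E] [NormedSpace 𝕜 F] {A : E →L[𝕜] F} {R : F →L[𝕜] E}
    (hAR : A.comp R = ContinuousLinearMap.id 𝕜 F) {c : ℝ} (hc : 0 < c)
    (hA : ∀ u, c * ‖u‖ ≤ ‖A u‖) : ‖R‖ ≤ c⁻¹ := by
  refine R.opNorm_le_bound (inv_nonneg.mpr hc.le) fun x => ?_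
  have hx := hA (R x)
  rw [← comp_apply, hAR, id_apply] at hx
  rw [inv_mul_eq_div, le_div_iff₀ hc, mul_comm]
  exact hx

theorem inv_norm_le_norm_of_comp_eq_id_of_apply_eq_smul [NormedAddCommGroup E]
    [NormedSpace 𝕜 E] {A R : E →L[𝕜] E} (hRA : R.comp A = ContinuousLinearMap.id 𝕜 E)
    {c : 𝕜} (hc : c ≠ 0) {v : E} (hv : v ≠ 0) (hAv : A v = c • v) : ‖c‖⁻¹ ≤ ‖R‖ := by
  have hRv : R v = c⁻¹ • v := by
    have h := congr($hRA v)
    rw [comp_apply, hAv, map_smul, id_apply] at h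
    exact (eq_inv_smul_iff₀ hc).mpr h
  have h := R.le_opNorm v
  rw [hRv, norm_smul, norm_inv] at h
  exact le_of_mul_le_mul_right h (norm_pos_iff.mpr hv)

theorem id_sub_comp_eq_smul_of_add_smul_id_comp [SeminormedAddCommGroup E] [NormedSpace 𝕜 E]
    {A R : E →L[𝕜] E} {t : 𝕜}
    (h : (A + t • ContinuousLinearMap.id 𝕜 E).comp R = ContinuousLinearMap.id 𝕜 E) :
    ContinuousLinearMap.id 𝕜 E - A.comp R = t • R := by
  rw [← h, add_comp, smul_comp, id_comp, add_sub_cancel_left]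

end ContinuousLinearMap

theorem norm_regularized_resolvent_general
    {Y : Type*} [NormedAddCommGroup Y] [InnerProductSpace ℝ Y]
    (B : Y →L[ℝ] Y)
    (lammin σ : ℝ) (hlam_pos : 0 < lammin) (hσ : 0 < σ)
    (hlam_lb : ∀ y : Y, lammin * ‖y‖ ^ 2 ≤ ⟪B y, y⟫)
    (hlam_eig : ∃ y : Y, y ≠ 0 ∧ B y = lammin • y)
    (Binv : Y →L[ℝ] Y)
    (hBinv : (B + σ • ContinuousLinearMap.id ℝ Y).comp Binv =
      ContinuousLinearMap.id ℝ Y)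
    (hBinv' : Binv.comp (B + σ • ContinuousLinearMap.id ℝ Y) =
      ContinuousLinearMap.id ℝ Y) :
    ‖ContinuousLinearMap.id ℝ Y - B.comp Binv‖ = σ / (lammin + σ) ∧
    ‖B.comp Binv‖ ≤ 1 := by
  have hls : 0 < lammin + σ := by linarith
  have hcoer : ∀ u, (lammin + σ) * ‖u‖ ^ 2 ≤ ⟪(B + σ • ContinuousLinearMap.id ℝ Y) u, u⟫ := by
    intro u
    simp only [add_apply, smul_apply, ContinuousLinearMap.id_apply,
      inner_add_left, real_inner_smul_left, real_inner_self_eq_norm_sq]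
    linarith [hlam_lb u]
  have hnorm : ‖Binv‖ = (lammin + σ)⁻¹ := by
    obtain ⟨y, hy, hBy⟩ := hlam_eig
    refine le_antisymm (ContinuousLinearMap.norm_le_inv_of_comp_eq_id hBinv hls
      (mul_norm_le_norm_of_mul_norm_sq_le_inner hcoer)) ?_
    have hy' : (B + σ • ContinuousLinearMap.id ℝ Y) y = (lammin + σ) • y := by
      simp [hBy, add_smul]
    simpa [abs_of_pos hls] using
      ContinuousLinearMap.inv_norm_le_norm_of_comp_eq_id_of_apply_eq_smul hBinv' hls.ne' hy hy'
  refine ⟨?_, B.comp Binv |>.opNorm_le_bound zero_le_one fun x => ?_⟩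
  · rw [ContinuousLinearMap.id_sub_comp_eq_smul_of_add_smul_id_comp hBinv, norm_smul, hnorm,
      Real.norm_of_nonneg hσ.le, div_eq_mul_inv]
  · have hx : B (Binv x) + σ • Binv x = x := by simpa using congr($hBinv x)
    have hBnn : 0 ≤ ⟪B (Binv x), Binv x⟫ := by
      nlinarith [hlam_lb (Binv x), sq_nonneg ‖Binv x‖]
    simpa [hx] using norm_le_norm_add_smul_of_inner_nonneg hBnn hσ.le

/-- For a self-adjoint positive definite operator B with smallest eigenvalue
λ_min > 0 and σ > 0, the operator norm of id − B(B+σ id)⁻¹ equals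
σ/(λ_min+σ), and the operator norm of B(B+σ id)⁻¹ is at most 1. -/
theorem norm_regularized_resolvent
    {Y : Type*} [NormedAddCommGroup Y] [InnerProductSpace ℝ Y]
    [FiniteDimensional ℝ Y]
    (B : Y →L[ℝ] Y)
    (hself : ContinuousLinearMap.adjoint B = B)
    (hpos : ∀ y : Y, y ≠ 0 → 0 < ⟪B y, y⟫)
    (lammin σ : ℝ) (hlam_pos : 0 < lammin) (hσ : 0 < σ)
    (hlam_lb : ∀ y : Y, lammin * ‖y‖ ^ 2 ≤ ⟪B y, y⟫)
    (hlam_eig : ∃ y : Y, y ≠ 0 ∧ B y = lammin • y)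
    (Binv : Y →L[ℝ] Y)
    (hBinv : (B + σ • ContinuousLinearMap.id ℝ Y).comp Binv =
      ContinuousLinearMap.id ℝ Y)
    (hBinv' : Binv.comp (B + σ • ContinuousLinearMap.id ℝ Y) =
      ContinuousLinearMap.id ℝ Y) :
    ‖ContinuousLinearMap.id ℝ Y - B.comp Binv‖ = σ / (lammin + σ) ∧
    ‖B.comp Binv‖ ≤ 1 :=
  norm_regularized_resolvent_general B lammin σ hlam_pos hσ hlam_lb hlam_eig Binv hBinv hBinv'
end

section
/- For fixed Q ∈ O(n) and M ∈ ℝ^{n×n}, the adjoint (with respect to the Frobenius inner product, where the domain is the tangent space T_Q O(n) = {QΩ : Ωᵀ = −Ω}) of the map QΩ ↦ [QMQᵀ, QΩQᵀ] is ΔZ ↦ (1/2)([QMQᵀ, ΔZᵀ] + [QMᵀQᵀ, ΔZ])Q. -/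
open Matrix

lemma tr_skew_helper {n : ℕ} (W S : Matrix (Fin n) (Fin n) ℝ) (hW : Wᵀ = -W) :
    Matrix.trace (W * Sᵀ) = - Matrix.trace (W * S) := by
  calc Matrix.trace (W * Sᵀ) = Matrix.trace ((W * Sᵀ)ᵀ) := (Matrix.trace_transpose _).symm
    _ = Matrix.trace (S * Wᵀ) := by rw [Matrix.transpose_mul, Matrix.transpose_transpose]
    _ = Matrix.trace (Wᵀ * S) := Matrix.trace_mul_comm _ _
    _ = - Matrix.trace (W * S) := by rw [hW, Matrix.neg_mul, Matrix.trace_neg]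

lemma cyc {n : ℕ} (X Y Z : Matrix (Fin n) (Fin n) ℝ) :
    Matrix.trace (X * (Y * Z)) = Matrix.trace (Z * (X * Y)) := by
  rw [← Matrix.mul_assoc, Matrix.trace_mul_comm]

lemma main_tr {n : ℕ} (A W ΔZ : Matrix (Fin n) (Fin n) ℝ) (hW : Wᵀ = -W) :
    Matrix.trace ((A * W - W * A)ᵀ * ΔZ) =
      Matrix.trace (Wᵀ * ((1 / 2 : ℝ) •
        ((A * ΔZᵀ - ΔZᵀ * A) + (Aᵀ * ΔZ - ΔZ * Aᵀ)))) := by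
  have e1 : Matrix.trace ((A * W - W * A)ᵀ * ΔZ)
      = Matrix.trace (W * (ΔZ * Aᵀ)) - Matrix.trace (W * (Aᵀ * ΔZ)) := by
    rw [Matrix.transpose_sub, Matrix.transpose_mul, Matrix.transpose_mul, hW]
    simp only [Matrix.neg_mul, Matrix.mul_neg, Matrix.sub_mul, Matrix.add_mul,
      sub_neg_eq_add, Matrix.trace_add, Matrix.trace_neg, Matrix.mul_assoc]
    rw [cyc Aᵀ W ΔZ, cyc ΔZ Aᵀ W]
    ring
  have ha : Matrix.trace (W * (A * ΔZᵀ)) = - Matrix.trace (W * (ΔZ * Aᵀ)) := by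
    rw [show A * ΔZᵀ = (ΔZ * Aᵀ)ᵀ by simp [Matrix.transpose_mul]]
    exact tr_skew_helper _ _ hW
  have hb : Matrix.trace (W * (ΔZᵀ * A)) = - Matrix.trace (W * (Aᵀ * ΔZ)) := by
    rw [show ΔZᵀ * A = (Aᵀ * ΔZ)ᵀ by simp [Matrix.transpose_mul]]
    exact tr_skew_helper _ _ hW
  have e2 : Matrix.trace (Wᵀ * ((1 / 2 : ℝ) •
      ((A * ΔZᵀ - ΔZᵀ * A) + (Aᵀ * ΔZ - ΔZ * Aᵀ))))
      = Matrix.trace (W * (ΔZ * Aᵀ)) - Matrix.trace (W * (Aᵀ * ΔZ)) := by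
    rw [hW]
    simp only [Matrix.neg_mul, Matrix.trace_neg, mul_smul_comm, Matrix.trace_smul,
      mul_add, mul_sub, Matrix.trace_add, Matrix.trace_sub, ha, hb, smul_eq_mul]
    ring
  rw [e1, e2]

lemma part1 {n : ℕ} (A ΔZ Q : Matrix (Fin n) (Fin n) ℝ) :
    (Qᵀ * (((1 / 2 : ℝ) • ((A * ΔZᵀ - ΔZᵀ * A) + (Aᵀ * ΔZ - ΔZ * Aᵀ))) * Q))ᵀ =
    -(Qᵀ * (((1 / 2 : ℝ) • ((A * ΔZᵀ - ΔZᵀ * A) + (Aᵀ * ΔZ - ΔZ * Aᵀ))) * Q)) := by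
  have hX : ((A * ΔZᵀ - ΔZᵀ * A) + (Aᵀ * ΔZ - ΔZ * Aᵀ))ᵀ
      = -((A * ΔZᵀ - ΔZᵀ * A) + (Aᵀ * ΔZ - ΔZ * Aᵀ)) := by
    simp only [Matrix.transpose_add, Matrix.transpose_sub, Matrix.transpose_mul,
      Matrix.transpose_transpose]
    abel
  rw [Matrix.transpose_mul, Matrix.transpose_mul, Matrix.transpose_smul, hX,
    Matrix.transpose_transpose, smul_neg]
  simp only [Matrix.mul_neg, Matrix.neg_mul, neg_add, ← neg_add_rev]
  ring_nf
  rw [add_comm, Matrix.mul_assoc]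


/-- For Q ∈ O(n) and fixed M, the adjoint of the map
QΩ ↦ [QMQᵀ, QΩQᵀ] from T_Q O(n) to ℝ^{n×n} (with the Frobenius inner product)
is ΔZ ↦ (1/2)([QMQᵀ, ΔZᵀ] + [QMᵀQᵀ, ΔZ])Q, which indeed lies in T_Q O(n). -/
theorem adjoint_commutator_map (n : ℕ) (Q M : Matrix (Fin n) (Fin n) ℝ)
    (hQ : Qᵀ * Q = 1) (ΔZ : Matrix (Fin n) (Fin n) ℝ) :
    (Qᵀ * (((1 / 2 : ℝ) •
        (((Q * M * Qᵀ) * ΔZᵀ - ΔZᵀ * (Q * M * Qᵀ))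
          + ((Q * Mᵀ * Qᵀ) * ΔZ - ΔZ * (Q * Mᵀ * Qᵀ)))) * Q))ᵀ =
      -(Qᵀ * (((1 / 2 : ℝ) •
        (((Q * M * Qᵀ) * ΔZᵀ - ΔZᵀ * (Q * M * Qᵀ))
          + ((Q * Mᵀ * Qᵀ) * ΔZ - ΔZ * (Q * Mᵀ * Qᵀ)))) * Q)) ∧
    ∀ Ω : Matrix (Fin n) (Fin n) ℝ, Ωᵀ = -Ω →
      Matrix.trace
          (((Q * M * Qᵀ) * (Q * Ω * Qᵀ) - (Q * Ω * Qᵀ) * (Q * M * Qᵀ))ᵀ * ΔZ) =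
        Matrix.trace ((Q * Ω)ᵀ *
          (((1 / 2 : ℝ) •
            (((Q * M * Qᵀ) * ΔZᵀ - ΔZᵀ * (Q * M * Qᵀ))
              + ((Q * Mᵀ * Qᵀ) * ΔZ - ΔZ * (Q * Mᵀ * Qᵀ)))) * Q)) := by
  have hAT : (Q * Mᵀ * Qᵀ) = (Q * M * Qᵀ)ᵀ := by
    simp [Matrix.transpose_mul, Matrix.mul_assoc]
  refine ⟨by rw [hAT]; exact part1 _ _ _, ?_⟩
  intro Ω hΩ
  rw [hAT]
  have hW : (Q * Ω * Qᵀ)ᵀ = -(Q * Ω * Qᵀ) := by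
    simp only [Matrix.transpose_mul, Matrix.transpose_transpose, hΩ]
    simp [Matrix.mul_assoc]
  rw [main_tr _ _ _ hW]
  conv_rhs => rw [← Matrix.mul_assoc, Matrix.trace_mul_comm, ← Matrix.mul_assoc]
  congr 1
  simp [Matrix.transpose_mul, Matrix.mul_assoc]
end

section
/- Suppose in addition to the hypotheses of the previous statement that ‖Ĝ(Δ) − Ĝ(0) − DĜ(0)[Δ]‖ ≤ ε‖Δ‖ with ‖Δ‖ ≤ β‖g‖ and εβ ≤ (1−t)(1−η), where η = 1 − Θ(1 − η̂) and t ∈ (0,1). Then ‖Ĝ(Δ)‖ ≤ (1 − t(1 − η))‖g‖. -/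
/-- Sufficient decrease: if ‖g + DĜ(0)[Δ]‖ ≤ η‖g‖ with η = 1 − Θ(1 − η̂),
and the linearization error satisfies ‖Ĝ(Δ) − Ĝ(0) − DĜ(0)[Δ]‖ ≤ ε‖Δ‖ with
‖Δ‖ ≤ β‖g‖ and εβ ≤ (1−t)(1−η), t ∈ (0,1), then ‖Ĝ(Δ)‖ ≤ (1 − t(1−η))‖g‖. -/
theorem sufficient_decrease_step
    {E F : Type*} [NormedAddCommGroup E] [NormedSpace ℝ E]
    [NormedAddCommGroup F] [NormedSpace ℝ F]
    (G : E → F) (D : E →L[ℝ] F) (hD : HasFDerivAt G D 0)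
    (g : F) (hg0 : G 0 = g) (hg : g ≠ 0)
    (Δ : E) (ηhat Θ η ε β t : ℝ)
    (hΘ : Θ ∈ Set.Ioc (0 : ℝ) 1) (hη : η = 1 - Θ * (1 - ηhat))
    (hε : 0 < ε) (hβ : 0 < β) (ht : t ∈ Set.Ioo (0 : ℝ) 1)
    (hres : ‖g + D Δ‖ ≤ η * ‖g‖)
    (hlin : ‖G Δ - G 0 - D Δ‖ ≤ ε * ‖Δ‖)
    (hstep : ‖Δ‖ ≤ β * ‖g‖)
    (hεβ : ε * β ≤ (1 - t) * (1 - η)) :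
    ‖G Δ‖ ≤ (1 - t * (1 - η)) * ‖g‖ := by
  have h1 : ‖G Δ‖ ≤ ‖G Δ - G 0 - D Δ‖ + ‖g + D Δ‖ := by
    have : G Δ = (G Δ - G 0 - D Δ) + (g + D Δ) := by rw [hg0]; abel
    calc ‖G Δ‖ = ‖(G Δ - G 0 - D Δ) + (g + D Δ)‖ := by rw [← this]
      _ ≤ _ := norm_add_le _ _
  have h2 : ε * ‖Δ‖ ≤ ε * β * ‖g‖ := by
    rw [mul_assoc]; exact mul_le_mul_of_nonneg_left hstep hε.le
  have h3 : ε * β * ‖g‖ ≤ (1 - t) * (1 - η) * ‖g‖ :=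
    mul_le_mul_of_nonneg_right hεβ (norm_nonneg g)
  calc ‖G Δ‖ ≤ ε * ‖Δ‖ + η * ‖g‖ := le_trans h1 (add_le_add hlin hres)
    _ ≤ (1 - t) * (1 - η) * ‖g‖ + η * ‖g‖ := by linarith
    _ = (1 - t * (1 - η)) * ‖g‖ := by ring
end
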